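/- arXiv:1509.03762 — 6 statements merged into one kernel-verified Lean document; each statement's English description precedes it below -/
import Mathlib

section
/- Let p be a prime, r a positive integer, and ν = p^r. If p does not divide μ, then there are no tuples (z_1,...,z_μ) of ν-th roots of unity summing to 0; i.e., α_{μ,ν} = 0. -/
open Polynomial

theorem alpha_eq_zero_of_not_dvd (p : ℕ) (hp : p.Prime) (r : ℕ) (hr : 0 < r)
    (ν : ℕ) (hν : ν = p ^ r) (μ : ℕ) (hμ : 0 < μ) (h : ¬ p ∣ μ) :
    ¬ ∃ z : Fin μ → ℂ, (∀ i, z i ^ ν = 1) ∧ ∑ i, z i = 0 := by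
  rintro ⟨z, hz, hsum⟩
  have hν0 : ν ≠ 0 := by
    rw [hν]; exact pow_ne_zero r hp.pos.ne'
  haveI : NeZero ν := ⟨hν0⟩
  set ζ : ℂ := Complex.exp (2 * Real.pi * Complex.I / ν) with hζdef
  have hζ : IsPrimitiveRoot ζ ν := Complex.isPrimitiveRoot_exp ν hν0
  choose a ha hza using fun i => hζ.eq_pow_of_pow_eq_one (hz i)
  set P : ℤ[X] := ∑ i : Fin μ, X ^ a i with hP
  have haeval : aeval ζ P = 0 := by
    rw [hP, map_sum]
    simpa [hza] using hsum
  have hint : IsIntegral ℤ ζ := hζ.isIntegral (Nat.pos_of_ne_zero hν0)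
  have hdvd : minpoly ℤ ζ ∣ P := minpoly.isIntegrallyClosed_dvd hint haeval
  rw [← Polynomial.cyclotomic_eq_minpoly hζ (Nat.pos_of_ne_zero hν0)] at hdvd
  have hd := Polynomial.eval_dvd (x := (1 : ℤ)) hdvd
  haveI : Fact p.Prime := ⟨hp⟩
  obtain ⟨k, rfl⟩ := Nat.exists_eq_add_of_lt hr
  rw [hν, show 0 + k + 1 = k + 1 by ring,
    Polynomial.eval_one_cyclotomic_prime_pow] at hd
  have hPeval : P.eval 1 = (μ : ℤ) := by simp [hP, Polynomial.eval_finset_sum]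
  rw [hPeval] at hd
  exact h (Int.ofNat_dvd.mp hd)
end

section
/- Let p be a prime, r a positive integer, ν = p^r, and suppose p divides μ. Then α_{μ,ν} = Σ μ! / (s_1! s_2! ... s_k!)^p, where k = ν/p and the sum is over all tuples of nonnegative integers (s_1,...,s_k) with s_1 + ... + s_k = μ/p. -/
/-!
Write the ν-th roots of unity as powers of a primitive root `ζ`, so that a tuple is a map
`a : Fin μ → Fin ν` and its sum is `∑ b, N b * ζ ^ b` with fibre sizes
`N b = #{i | a i = b}`. For `ν = p ^ (r + 1)` the minimal polynomial of `ζ` is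
`Φ = ∑ t < p, X ^ (t * p ^ r)`, and a polynomial of degree `< ν` is a multiple of `Φ` exactly
when its coefficients are `p ^ r`-periodic. Hence the tuple sums to zero iff `N` consists of
`p` copies of some `s : Fin (p ^ r) → ℕ`, necessarily with `∑ s = μ / p`, and the number of
maps with fibre sizes `N` is the multinomial coefficient
`μ! / ∏ b, (N b)! = μ! / (∏ j, (s j)!) ^ p`.
-/

/-- The number of μ-tuples of ν-th roots of unity summing to 0. -/
noncomputable def alpha (μ ν : ℕ) : ℕ :=
  {z : Fin μ → ℂ | (∀ i, z i ^ ν = 1) ∧ ∑ i, z i = 0}.ncard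

open Finset Polynomial
open scoped Nat

section FiberCount

variable {α ι : Type*} [Fintype α] [DecidableEq ι]

theorem exists_card_fiber_eq [Fintype ι] (m : ι → ℕ) (hm : ∑ i, m i = Fintype.card α) :
    ∃ f : α → ι, ∀ i, #{a | f a = i} = m i := by
  obtain ⟨e⟩ : Nonempty (α ≃ Σ i, Fin (m i)) := Fintype.card_eq.mp (by simp [hm])
  refine ⟨fun a => (e a).1, fun i => ?_⟩
  rw [← Fintype.card_subtype, ← Fintype.card_fin (m i)]
  exact Fintype.card_congr ((e.subtypeEquiv (q := (·.1 = i)) fun _ => Iff.rfl).trans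
    (Equiv.sigmaSubtype i))

theorem card_fiber_comp_perm (f : α → ι) (σ : Equiv.Perm α) (i : ι) :
    #{a | f (σ a) = i} = #{a | f a = i} := by
  simp only [← Fintype.card_subtype]
  exact Fintype.card_congr (σ.subtypeEquiv fun _ => Iff.rfl)

theorem card_perm_comp_eq_prod_factorial [DecidableEq α] [Fintype ι] {f g : α → ι}
    (hfg : ∀ i, #{a | g a = i} = #{a | f a = i}) :
    #{σ : Equiv.Perm α | f ∘ σ = g} = ∏ i, (#{a | f a = i})! := by
  simp only [← Fintype.card_subtype] at hfg ⊢
  obtain ⟨τ, hτ⟩ : ∃ τ : Equiv.Perm α, f ∘ τ = g :=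
    ⟨Equiv.ofFiberEquiv fun i => Fintype.equivOfCardEq (hfg i),
      funext (Equiv.ofFiberEquiv_map _)⟩
  rw [← DomMulAct.stabilizer_card f, ← hτ]
  refine Fintype.card_congr ((Equiv.mulRight τ⁻¹).subtypeEquiv fun σ => ?_)
  constructor
  · intro h
    ext a
    simpa using congrFun h (τ⁻¹ a)
  · intro h
    ext a
    simpa using congrFun h (τ a)

theorem card_fun_card_fiber_eq_multinomial [DecidableEq α] [Fintype ι] (m : ι → ℕ)
    (hm : ∑ i, m i = Fintype.card α) :
    #{g : α → ι | ∀ i, #{a | g a = i} = m i} = Nat.multinomial univ m := by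
  obtain ⟨f, hf⟩ := exists_card_fiber_eq m hm
  set T := ({g : α → ι | ∀ i, #{a | g a = i} = m i} : Finset _)
  have hmaps : ((univ : Finset (Equiv.Perm α)) : Set _).MapsTo
      (fun σ : Equiv.Perm α => f ∘ σ) T :=
    fun σ _ => by simp [T, card_fiber_comp_perm, hf]
  have hfiber : ∀ g ∈ T, #{σ : Equiv.Perm α | f ∘ σ = g} = ∏ i, (m i)! := fun g hg => by
    simp only [T, mem_filter, mem_univ, true_and] at hg
    rw [card_perm_comp_eq_prod_factorial fun i => by rw [hg, hf]]
    simp only [hf]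
  have hcount : (Fintype.card α)! = #T * ∏ i, (m i)! := by
    rw [← Fintype.card_perm, ← Finset.card_univ, card_eq_sum_card_fiberwise hmaps,
      sum_congr rfl hfiber, sum_const, smul_eq_mul]
  apply Nat.eq_of_mul_eq_mul_left (prod_pos fun i _ => (m i).factorial_pos)
  rw [Nat.multinomial_spec, hm, hcount, mul_comm]

end FiberCount

namespace Fin

theorem modNat_finProdFinEquiv {m n : ℕ} (x : Fin m × Fin n) :
    (finProdFinEquiv x).modNat = x.2 :=
  congrArg Prod.snd (finProdFinEquiv.symm_apply_apply x)

@[to_additive]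
theorem prod_repeat {M : Type*} [CommMonoid M] {n : ℕ} (m : ℕ) (a : Fin n → M) :
    ∏ i, Fin.repeat m a i = (∏ j, a j) ^ m := by
  rw [← (finProdFinEquiv (m := m) (n := n)).prod_comp, Fintype.prod_prod_type]
  simp [modNat_finProdFinEquiv]

theorem repeat_injective {α : Sort*} {m n : ℕ} (hm : 0 < m) :
    Function.Injective (Fin.repeat m : (Fin n → α) → Fin (m * n) → α) := fun a b h =>
  funext fun j => by
    simpa [modNat_finProdFinEquiv] using congrFun h (finProdFinEquiv (⟨0, hm⟩, j))

end Fin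

theorem Polynomial.coeff_geom_sum_X_pow_mul {R : Type*} [Semiring R] {g : R[X]} {k : ℕ}
    (hg : g.natDegree < k) {m n : ℕ} (hn : n < m * k) :
    ((∑ t ∈ range m, (X ^ k) ^ t) * g).coeff n = g.coeff (n % k) := by
  simp only [sum_mul, finsetSum_coeff, ← pow_mul, coeff_X_pow_mul']
  rw [sum_eq_single (n / k), if_pos (Nat.mul_div_le n k), Nat.mod_eq_sub_mul_div]
  · intro t _ ht
    split_ifs with hle
    · apply coeff_eq_zero_of_natDegree_lt
      have : t < n / k := lt_of_le_of_ne ((Nat.le_div_iff_mul_le (by omega)).2 (by linarith)) ht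
      have : k * (t + 1) ≤ n := (Nat.mul_le_mul_left k this).trans (Nat.mul_div_le n k)
      rw [mul_add] at this
      omega
    · rfl
  · exact fun h => absurd (mem_range.2 (Nat.div_lt_of_lt_mul (by linarith))) h

namespace IsPrimitiveRoot

theorem sum_repeat_mul_pow_eq_zero {R : Type*} [CommRing R] [IsDomain R] {m k : ℕ} (hm : 1 < m)
    {ζ : R} (hζ : IsPrimitiveRoot ζ (m * k)) (d : Fin k → R) :
    ∑ b, Fin.repeat m d b * ζ ^ (b : ℕ) = 0 := by
  rcases Nat.eq_zero_or_pos k with rfl | hk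
  · simp
  have hζk : IsPrimitiveRoot (ζ ^ k) m := hζ.pow (by positivity) (mul_comm m k)
  have hgeom : ∑ t : Fin m, (ζ ^ k) ^ (t : ℕ) = 0 := by
    rw [Fin.sum_univ_eq_sum_range (fun t => (ζ ^ k) ^ t), hζk.geom_sum_eq_zero hm]
  calc ∑ b, Fin.repeat m d b * ζ ^ (b : ℕ)
      = ∑ t : Fin m, (ζ ^ k) ^ (t : ℕ) * ∑ j, d j * ζ ^ (j : ℕ) := by
        rw [← finProdFinEquiv.sum_comp, Fintype.sum_prod_type]
        refine sum_congr rfl fun t _ => ?_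
        rw [mul_sum]
        refine sum_congr rfl fun j _ => ?_
        rw [Fin.repeat_apply, Fin.modNat_finProdFinEquiv]
        simp [finProdFinEquiv, pow_add, pow_mul]
        ring
    _ = 0 := by rw [← sum_mul, hgeom, zero_mul]

theorem exists_eq_repeat_of_sum_mul_pow_eq_zero {K : Type*} [Field K] [CharZero K] {p r : ℕ}
    (hp : p.Prime) {ζ : K} (hζ : IsPrimitiveRoot ζ (p * p ^ r)) {c : Fin (p * p ^ r) → ℤ}
    (h : ∑ b, (c b : K) * ζ ^ (b : ℕ) = 0) : ∃ d, c = Fin.repeat p d := by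
  have hpos : 0 < p * p ^ r := Nat.mul_pos hp.pos (pow_pos hp.pos r)
  set f : ℤ[X] := ∑ b, C (c b) * X ^ (b : ℕ)
  have hf_coeff (b : Fin (p * p ^ r)) : f.coeff b = c b := by
    simp [f, finsetSum_coeff, Fin.val_inj]
  obtain ⟨g, hfg⟩ : cyclotomic (p * p ^ r) ℤ ∣ f := by
    rw [cyclotomic_eq_minpoly hζ hpos]
    exact minpoly.isIntegrallyClosed_dvd (hζ.isIntegral hpos) (by simpa [f] using h)
  have hg : g.natDegree < p ^ r := by
    rcases eq_or_ne g 0 with rfl | hg0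
    · simp [hp.pos]
    have hf : f.natDegree < p * p ^ r :=
      (natDegree_lt_iff_degree_lt (by simp [hfg, hg0, cyclotomic_ne_zero])).2
        (degree_sum_fin_lt c)
    rw [hfg, natDegree_mul (cyclotomic_ne_zero _ ℤ) hg0, natDegree_cyclotomic, ← pow_succ',
      Nat.totient_prime_pow_succ hp, pow_succ'] at hf
    have : p ^ r * (p - 1) + p ^ r = p * p ^ r := by
      rw [← Nat.mul_succ, Nat.succ_eq_add_one, Nat.sub_add_cancel hp.one_le, mul_comm]
    omega
  refine ⟨fun j => g.coeff j, funext fun b => ?_⟩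
  have hΦ : cyclotomic (p * p ^ r) ℤ = ∑ t ∈ range p, (X ^ p ^ r) ^ t := by
    rw [← pow_succ', cyclotomic_prime_pow_eq_geom_sum hp]
  rw [← hf_coeff, hfg, hΦ, coeff_geom_sum_X_pow_mul hg b.isLt]
  rfl

theorem sum_pow_eq_zero_iff {K : Type*} [Field K] [CharZero K] {p r : ℕ} (hp : p.Prime) {ζ : K}
    (hζ : IsPrimitiveRoot ζ (p * p ^ r)) {ι : Type*} [Fintype ι] (a : ι → Fin (p * p ^ r)) :
    ∑ i, ζ ^ (a i : ℕ) = 0 ↔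
      ∃ s : Fin (p ^ r) → ℕ, ∀ b, #{i | a i = b} = Fin.repeat p s b := by
  have hsum : ∑ i, ζ ^ (a i : ℕ) = ∑ b, ((#{i | a i = b} : ℤ) : K) * ζ ^ (b : ℕ) := by
    rw [← sum_fiberwise univ a]
    refine sum_congr rfl fun b _ => ?_
    rw [sum_congr rfl fun i hi => by rw [(mem_filter.1 hi).2], sum_const, nsmul_eq_mul]
    push_cast
    rfl
  rw [hsum]
  constructor
  · intro h
    obtain ⟨d, hd⟩ := exists_eq_repeat_of_sum_mul_pow_eq_zero hp hζ h
    refine ⟨fun j => (d j).toNat, fun b => ?_⟩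
    rw [Fin.repeat_apply, show d b.modNat = #{i | a i = b} from (congrFun hd b).symm,
      Int.toNat_natCast]
  · rintro ⟨s, hs⟩
    simpa [hs] using sum_repeat_mul_pow_eq_zero hp.one_lt hζ (fun j => (s j : K))

theorem card_filter_sum_pow_eq_zero {K : Type*} [Field K] [CharZero K] [DecidableEq K] {p r : ℕ}
    (hp : p.Prime) {ζ : K} (hζ : IsPrimitiveRoot ζ (p * p ^ r)) (m : ℕ) :
    #{a : Fin (p * m) → Fin (p * p ^ r) | ∑ i, ζ ^ (a i : ℕ) = 0} =
      ∑ s ∈ Nat.antidiagonalTuple (p ^ r) m, (p * m)! / (∏ j, (s j)!) ^ p := by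
  have hfilter : ({a | ∑ i, ζ ^ (a i : ℕ) = 0} : Finset (Fin (p * m) → Fin (p * p ^ r))) =
      (Nat.antidiagonalTuple (p ^ r) m).biUnion
        fun s => {a : Fin (p * m) → Fin (p * p ^ r) |
          ∀ b, #{i | a i = b} = Fin.repeat p s b} := by
    ext a
    simp only [mem_filter, mem_univ, true_and, mem_biUnion, Nat.mem_antidiagonalTuple,
      hζ.sum_pow_eq_zero_iff hp]
    refine ⟨fun ⟨s, hs⟩ => ⟨s, ?_, hs⟩, fun ⟨s, _, hs⟩ => ⟨s, hs⟩⟩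
    apply Nat.eq_of_mul_eq_mul_left hp.pos
    rw [← smul_eq_mul, ← Fin.sum_repeat, ← sum_congr rfl fun b _ => hs b,
      ← card_eq_sum_card_fiberwise fun _ _ => mem_coe.2 (mem_univ _), card_univ, Fintype.card_fin]
  rw [hfilter, card_biUnion]
  · refine sum_congr rfl fun s hs => ?_
    have hsum : ∑ b, Fin.repeat p s b = Fintype.card (Fin (p * m)) := by
      rw [Fin.sum_repeat, (Nat.mem_antidiagonalTuple.1 hs), smul_eq_mul, Fintype.card_fin]
    calc _ = Nat.multinomial univ (Fin.repeat p s) := by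
          -- the two filters differ only in their decidability instances
          convert card_fun_card_fiber_eq_multinomial _ hsum
      _ = _ := by
          rw [Nat.multinomial, hsum, Fintype.card_fin]
          exact congrArg _ (Fin.prod_repeat p fun j => (s j)!)
  · intro s _ t _ hst
    refine disjoint_left.2 fun a hs ht => hst (Fin.repeat_injective hp.pos (funext fun b => ?_))
    simp only [mem_filter, mem_univ, true_and] at hs ht
    rw [← hs, ht]

end IsPrimitiveRoot

theorem alpha_eq_card_filter_sum_pow_eq_zero {μ ν : ℕ} [NeZero ν] {ζ : ℂ}
    (hζ : IsPrimitiveRoot ζ ν) :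
    alpha μ ν = #{a : Fin μ → Fin ν | ∑ i, ζ ^ (a i : ℕ) = 0} := by
  have hinj : Function.Injective fun (a : Fin μ → Fin ν) i => ζ ^ (a i : ℕ) := fun a a' h =>
    funext fun i => Fin.ext (hζ.pow_inj (a i).isLt (a' i).isLt (congrFun h i))
  rw [alpha, ← Set.ncard_coe_finset, ← Set.ncard_image_of_injective _ hinj]
  congr 1
  ext z
  simp only [coe_filter, mem_univ, true_and, Set.mem_image, Set.mem_ofPred_eq]
  constructor
  · rintro ⟨hz, hsum⟩
    choose b hb hbz using fun i => hζ.eq_pow_of_pow_eq_one (hz i)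
    exact ⟨fun i => ⟨b i, hb i⟩, by simpa [hbz] using hsum, funext hbz⟩
  · rintro ⟨a, hsum, rfl⟩
    exact ⟨fun i => by rw [← pow_mul, mul_comm, pow_mul, hζ.pow_eq_one, one_pow], hsum⟩

theorem alpha_prime_power_general (p : ℕ) (hp : p.Prime) (r : ℕ) (hr : 0 < r)
    (ν : ℕ) (hν : ν = p ^ r) (μ : ℕ) (h : p ∣ μ) :
    alpha μ ν =
      ∑ s ∈ Finset.Nat.antidiagonalTuple (ν / p) (μ / p),
        Nat.factorial μ / (∏ i, Nat.factorial (s i)) ^ p := by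
  obtain ⟨r, rfl⟩ : ∃ r', r = r' + 1 := ⟨r - 1, by omega⟩
  obtain ⟨m, rfl⟩ := h
  rw [pow_succ'] at hν
  subst hν
  have : NeZero (p * p ^ r) := ⟨(Nat.mul_pos hp.pos (pow_pos hp.pos r)).ne'⟩
  have hζ := Complex.isPrimitiveRoot_exp (p * p ^ r) (NeZero.ne _)
  rw [Nat.mul_div_cancel_left _ hp.pos, Nat.mul_div_cancel_left _ hp.pos,
    alpha_eq_card_filter_sum_pow_eq_zero hζ, hζ.card_filter_sum_pow_eq_zero hp]

theorem alpha_prime_power (p : ℕ) (hp : p.Prime) (r : ℕ) (hr : 0 < r)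
    (ν : ℕ) (hν : ν = p ^ r) (μ : ℕ) (hμ : 0 < μ) (h : p ∣ μ) :
    alpha μ ν =
      ∑ s ∈ Finset.Nat.antidiagonalTuple (ν / p) (μ / p),
        Nat.factorial μ / (∏ i, Nat.factorial (s i)) ^ p :=
  alpha_prime_power_general p hp r hr ν hν μ h
end

section
/- Let p be a prime and ν = p^r. Any multiset of ν-th roots of unity summing to zero can be partitioned into sub-multisets each of which is of the form {w, wζ, wζ^2, ..., wζ^{p-1}} for some ν-th root of unity w, where ζ = e^{2πi/p}. -/
open Polynomial in
private lemma count_join' {α : Type*} [DecidableEq α] (S : Multiset (Multiset α)) (a : α) :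
    S.join.count a = (S.map (Multiset.count a)).sum := by
  induction S using Multiset.induction with
  | empty => simp
  | cons x S ih => simp [Multiset.join_cons, ih]

open Complex in
theorem multiset_roots_sum_zero_partition (p : ℕ) (hp : p.Prime) (r : ℕ) (hr : 0 < r)
    (ν : ℕ) (hν : ν = p ^ r) (M : Multiset ℂ)
    (hroots : ∀ z ∈ M, z ^ ν = 1) (hsum : M.sum = 0) :
    ∃ parts : Multiset (Multiset ℂ),
      parts.join = M ∧
      ∀ P ∈ parts, ∃ w : ℂ, w ^ ν = 1 ∧
        P = (Multiset.range p).map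
          (fun j => w * Complex.exp (2 * Real.pi * Complex.I / p) ^ j) := by
  classical
  have hp1 : 1 < p := hp.one_lt
  have hν0 : ν ≠ 0 := by simp [hν, hp.pos.ne']
  haveI : NeZero ν := ⟨hν0⟩
  set q : ℕ := p ^ (r - 1) with hq
  have hq0 : 0 < q := pow_pos hp.pos _
  have hqp : q * p = ν := by
    rw [hν, hq, ← pow_succ]; congr 1; omega
  set ζ : ℂ := Complex.exp (2 * Real.pi * Complex.I / ν) with hζdef
  have hζ : IsPrimitiveRoot ζ ν := Complex.isPrimitiveRoot_exp ν hν0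
  have hζν : ζ ^ ν = 1 := hζ.pow_eq_one
  -- exponent function
  set e : ℂ → ℕ := fun z => if h : z ^ ν = 1 then (hζ.eq_pow_of_pow_eq_one h).choose else 0
    with he
  have hespec : ∀ z : ℂ, z ^ ν = 1 → e z < ν ∧ ζ ^ e z = z := by
    intro z hz
    have := (hζ.eq_pow_of_pow_eq_one hz).choose_spec
    simp only [he, dif_pos hz]
    exact this
  set K : Multiset ℕ := M.map e with hKdef
  have hK : K.map (fun k => ζ ^ k) = M := by
    rw [hKdef, Multiset.map_map]
    calc M.map (fun z => ζ ^ e z) = M.map id :=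
          Multiset.map_congr rfl (fun z hz => (hespec z (hroots z hz)).2)
      _ = M := Multiset.map_id M
  have hlt : ∀ k ∈ K, k < ν := by
    intro k hk
    obtain ⟨z, hz, rfl⟩ := Multiset.mem_map.1 hk
    exact (hespec z (hroots z hz)).1
  set c : ℕ → ℕ := fun k => K.count k with hc
  have hczero : ∀ k, ν ≤ k → c k = 0 := by
    intro k hk
    rw [hc]
    simp only [Multiset.count_eq_zero]
    intro hkK; exact absurd (hlt k hkK) (by omega)
  -- the vanishing sum
  have hsum2 : ∑ k ∈ Finset.range ν, (c k : ℂ) * ζ ^ k = 0 := by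
    have h1 : (K.map (fun k => ζ ^ k)).sum = 0 := by rw [hK]; exact hsum
    rw [Finset.sum_multiset_map_count K (fun k => ζ ^ k)] at h1
    have h2 : ∑ m ∈ K.toFinset, K.count m • ζ ^ m
        = ∑ m ∈ K.toFinset, (c m : ℂ) * ζ ^ m :=
      Finset.sum_congr rfl (fun m _ => by rw [hc, nsmul_eq_mul])
    rw [h2] at h1
    rw [← h1]
    refine (Finset.sum_subset ?_ ?_).symm
    · intro x hx
      exact Finset.mem_range.2 (hlt x (Multiset.mem_toFinset.1 hx))
    · intro x _ hnx
      have hx0 : c x = 0 := by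
        rw [hc]; simp only [Multiset.count_eq_zero]
        intro hxK; exact hnx (Multiset.mem_toFinset.2 hxK)
      rw [hx0]
      simp
  -- the polynomial
  set f : Polynomial ℤ := ∑ k ∈ Finset.range ν, Polynomial.C ((c k : ℤ)) * Polynomial.X ^ k with hf
  have hcoeff : ∀ k, f.coeff k = if k < ν then (c k : ℤ) else 0 := by
    intro k
    rw [hf, Polynomial.finset_sum_coeff]
    simp only [Polynomial.coeff_C_mul, Polynomial.coeff_X_pow, mul_ite, mul_one, mul_zero]
    rw [Finset.sum_ite_eq (Finset.range ν) k]
    simp [Finset.mem_range]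
  have heval : (Polynomial.aeval ζ) f = 0 := by
    rw [hf]
    simp only [map_sum, map_mul, map_pow, Polynomial.aeval_C, Polynomial.aeval_X]
    simpa using hsum2
  have hdvd : Polynomial.cyclotomic ν ℤ ∣ f := by
    rw [Polynomial.cyclotomic_eq_minpoly hζ (Nat.pos_of_ne_zero hν0)]
    exact minpoly.isIntegrallyClosed_dvd (hζ.isIntegral (Nat.pos_of_ne_zero hν0)) heval
  obtain ⟨g, hg⟩ := hdvd
  have hΦ : Polynomial.cyclotomic ν ℤ = ∑ i ∈ Finset.range p, Polynomial.X ^ (q * i) := by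
    have : ν = p ^ ((r - 1) + 1) := by rw [hν]; congr 1; omega
    rw [this, Polynomial.cyclotomic_prime_pow_eq_geom_sum hp]
    refine Finset.sum_congr rfl fun i _ => ?_
    rw [← pow_mul]
  -- degree of f
  have hdegf : ∀ m, ν ≤ m → f.coeff m = 0 := by
    intro m hm; rw [hcoeff]; simp [Nat.not_lt.2 hm]
  have hdegg : g.natDegree < q := by
    rcases eq_or_ne g 0 with h0 | h0
    · simpa [h0] using hq0
    have hΦ0 : Polynomial.cyclotomic ν ℤ ≠ 0 :=
      (Polynomial.cyclotomic.monic ν ℤ).ne_zero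
    have hf0 : f ≠ 0 := by rw [hg]; exact mul_ne_zero hΦ0 h0
    have hdf : f.natDegree < ν := by
      rw [Polynomial.natDegree_lt_iff_degree_lt hf0]
      exact (Polynomial.degree_lt_iff_coeff_zero f ν).2
        (fun m hm => hdegf m (by exact_mod_cast hm))
    have hdΦ : (Polynomial.cyclotomic ν ℤ).natDegree = q * (p - 1) := by
      rw [Polynomial.natDegree_cyclotomic, hν, Nat.totient_prime_pow hp hr, hq, mul_comm]
    have := Polynomial.natDegree_mul hΦ0 h0
    rw [← hg, hdΦ] at this
    have hνq : q * (p - 1) + q = ν := by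
      have h5 : q * (p - 1) + q = q * p := by
        cases p with
        | zero => omega
        | succ n => rw [Nat.succ_sub_one, Nat.mul_succ]
      rw [h5, hqp]
    omega
  -- coefficient identity
  have hcoeff2 : ∀ n, f.coeff n = ∑ i ∈ Finset.range p,
      (if q * i ≤ n then g.coeff (n - q * i) else 0) := by
    intro n
    rw [hg, hΦ, Finset.sum_mul, Polynomial.finset_sum_coeff]
    refine Finset.sum_congr rfl fun i _ => ?_
    rw [mul_comm (Polynomial.X ^ (q * i)) g, Polynomial.coeff_mul_X_pow']
  have hkey : ∀ m < q, ∀ t < p, (c (m + t * q) : ℤ) = g.coeff m := by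
    intro m hm t ht
    have h1 : f.coeff (m + t * q) = g.coeff m := by
      rw [hcoeff2]
      have hcq : q * t = t * q := mul_comm q t
      rw [Finset.sum_eq_single t]
      · rw [if_pos (by omega)]
        congr 1; omega
      · intro i hi hne
        rcases lt_or_gt_of_ne hne with hlt' | hgt
        · have h4 : q * i + q ≤ q * t := by
            have := Nat.mul_le_mul_left q (show i + 1 ≤ t by omega)
            rwa [Nat.mul_succ] at this
          rw [if_pos (by omega)]
          apply Polynomial.coeff_eq_zero_of_natDegree_lt
          omega
        · have h4 : q * t + q ≤ q * i := by
            have := Nat.mul_le_mul_left q (show t + 1 ≤ i by omega)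
            rwa [Nat.mul_succ] at this
          rw [if_neg (by omega)]
      · intro h; exact absurd (Finset.mem_range.2 ht) h
    have h5 : p * q = ν := by rw [mul_comm]; exact hqp
    have h4 : t * q + q ≤ p * q := by
      have := Nat.mul_le_mul_right q (show t + 1 ≤ p by omega)
      rwa [Nat.succ_mul] at this
    rw [← h1, hcoeff, if_pos (by omega)]
  have hconst : ∀ m < q, ∀ t < p, c (m + t * q) = c m := by
    intro m hm t ht
    have h1 := hkey m hm t ht
    have h2 := hkey m hm 0 hp.pos
    simp only [zero_mul, add_zero] at h2
    exact_mod_cast h1.trans h2.symm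
  -- construct the partition
  set L : ℕ → Multiset ℕ := fun m => (Multiset.range p).map (fun j => m + j * q) with hL
  set Eparts : Multiset (Multiset ℕ) :=
    (Multiset.range q).bind (fun m => Multiset.replicate (c m) (L m)) with hE
  have hLnodup : ∀ m, (L m).Nodup := by
    intro m
    refine Multiset.Nodup.map ?_ (Multiset.nodup_range p)
    intro a b hab
    simp only at hab
    have h4 : a * q = b * q := by omega
    exact Nat.eq_of_mul_eq_mul_right hq0 h4
  have hLcount : ∀ m k : ℕ, (L m).count k = if k ∈ L m then 1 else 0 := by
    intro m k
    split
    · exact Multiset.count_eq_one_of_mem (hLnodup m) (by assumption)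
    · exact Multiset.count_eq_zero_of_notMem (by assumption)
  have hjoin : Eparts.join = K := by
    refine Multiset.ext.2 fun k => ?_
    rw [count_join', hE, Multiset.map_bind, Multiset.sum_bind]
    simp only [Multiset.map_replicate, Multiset.sum_replicate, smul_eq_mul]
    have hrange : ((Multiset.range q).map
        (fun m => c m * (L m).count k)).sum
        = ∑ m ∈ Finset.range q, c m * (L m).count k := rfl
    rw [hrange]
    have hcK : ∀ j : ℕ, Multiset.count j K = c j := fun _ => rfl
    rcases lt_or_ge k ν with hkν | hkν
    · have hkmod : k % q < q := Nat.mod_lt _ hq0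
      have hkdiv : k / q < p := Nat.div_lt_of_lt_mul (by rw [hqp]; exact hkν)
      rw [Finset.sum_eq_single (k % q)]
      · have hmem : k ∈ L (k % q) := by
          rw [hL]
          simp only [Multiset.mem_map, Multiset.mem_range]
          exact ⟨k / q, hkdiv, Nat.mod_add_div' k q⟩
        rw [hLcount, if_pos hmem, mul_one]
        have hck : c k = c (k % q) := by
          have := hconst (k % q) hkmod (k / q) hkdiv
          rwa [Nat.mod_add_div' k q] at this
        rw [hcK k, hck]
      · intro m hm hne
        have hnmem : k ∉ L m := by
          rw [hL]
          simp only [Multiset.mem_map, Multiset.mem_range]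
          rintro ⟨j, hj, hjk⟩
          have hmq : m < q := Finset.mem_range.1 hm
          have : k % q = m := by
            rw [← hjk, Nat.add_mul_mod_self_right, Nat.mod_eq_of_lt hmq]
          exact hne this.symm
        rw [hLcount, if_neg hnmem, mul_zero]
      · intro h; exact absurd (Finset.mem_range.2 hkmod) h
    · rw [hcK k, hczero k hkν]
      refine Finset.sum_eq_zero fun m hm => ?_
      have hnmem : k ∉ L m := by
        rw [hL]
        simp only [Multiset.mem_map, Multiset.mem_range]
        rintro ⟨j, hj, hjk⟩
        have hmq : m < q := Finset.mem_range.1 hm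
        have h4 : j * q + q ≤ p * q := by
          have := Nat.mul_le_mul_right q (show j + 1 ≤ p by omega)
          rwa [Nat.succ_mul] at this
        have h5 : p * q = ν := by rw [mul_comm]; exact hqp
        omega
      rw [hLcount, if_neg hnmem, mul_zero]
  -- the exponential identity
  have hζq : ζ ^ q = Complex.exp (2 * Real.pi * Complex.I / p) := by
    rw [hζdef, ← Complex.exp_nat_mul]
    congr 1
    have hpC : (p : ℂ) ≠ 0 := Nat.cast_ne_zero.2 hp.pos.ne'
    have hνC : (ν : ℂ) ≠ 0 := Nat.cast_ne_zero.2 hν0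
    have hνqp : (ν : ℂ) = (q : ℂ) * p := by exact_mod_cast hqp.symm
    have hqC : ((q : ℕ) : ℂ) ≠ 0 := Nat.cast_ne_zero.2 hq0.ne'
    rw [hνqp]
    field_simp
  refine ⟨Eparts.map (Multiset.map (fun k => ζ ^ k)), ?_, ?_⟩
  · rw [← Multiset.map_join, hjoin, hK]
  · intro P hP
    obtain ⟨Q, hQ, rfl⟩ := Multiset.mem_map.1 hP
    rw [hE, Multiset.mem_bind] at hQ
    obtain ⟨m, hm, hQ⟩ := hQ
    have hQL : Q = L m := Multiset.eq_of_mem_replicate hQ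
    refine ⟨ζ ^ m, ?_, ?_⟩
    · rw [← pow_mul, mul_comm, pow_mul, hζν, one_pow]
    · rw [hQL, hL, Multiset.map_map]
      refine Multiset.map_congr rfl fun j hj => ?_
      simp only [Function.comp_apply]
      rw [pow_add, pow_mul', hζq]
end

section
/- Let f(z_1,...,z_m) = 1 + (z_1+ξ_1)^d + ... + (z_m+ξ_m)^d + (ξ_{m+1} - z_1 - ... - z_m)^d where d ≥ 2 and ξ_1,...,ξ_{m+1} are complex numbers with ξ_j^{d-1} = 1 and 1 + ξ_1 + ... + ξ_{m+1} = 0. Then f(0) = 0, all partial derivatives ∂f/∂z_j vanish at 0, and the Hessian matrix of f at 0 is invertible (so the origin is a nondegenerate critical point of f, hence an ordinary double point of {f = 0}). -/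
/-!
Since `ξ ^ (d - 1) = 1`, we have `ξ ^ d = ξ` and `ξ ^ (d - 2) = ξ⁻¹`, so `f(0) = 1 + ∑ ξ_j = 0`,
each first partial at `0` is `d ξ_j^(d-1) - d ξ_{m+1}^(d-1) = 0`, and the Hessian at `0` is
`d (d - 1) (diag (ξ_j⁻¹) + ξ_{m+1}⁻¹ J)` with `J` the all-ones matrix. By the matrix determinant
lemma its determinant is `(d (d - 1))^m ∏ ξ_j⁻¹ (1 + ξ_{m+1}⁻¹ ∑_{j ≤ m} ξ_j)`, and
`∑_{j ≤ m} ξ_j = -1 - ξ_{m+1}` turns the last factor into `-ξ_{m+1}⁻¹ ≠ 0`.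
-/

open MvPolynomial Matrix

namespace MvPolynomial

variable {σ R : Type*} [Fintype σ] [CommRing R]

noncomputable def shiftedFermat (d : ℕ) (a : σ → R) (b : R) : MvPolynomial σ R :=
  C 1 + ∑ j, (X j + C (a j)) ^ d + (C b - ∑ j, X j) ^ d

variable (d : ℕ) (a : σ → R) (b : R)

theorem eval_zero_shiftedFermat :
    eval 0 (shiftedFermat d a b) = 1 + ∑ j, a j ^ d + b ^ d := by
  simp [shiftedFermat]

variable [DecidableEq σ]

theorem eval_zero_pderiv_shiftedFermat (i : σ) :
    eval 0 (pderiv i (shiftedFermat d a b)) = d * a i ^ (d - 1) - d * b ^ (d - 1) := by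
  simp [shiftedFermat, pderiv_X, Pi.single_apply, sub_eq_add_neg]

theorem eval_zero_pderiv_pderiv_shiftedFermat (i k : σ) :
    eval 0 (pderiv i (pderiv k (shiftedFermat d a b))) =
      d * (d - 1 : ℕ) * ((if i = k then a i ^ (d - 2) else 0) + b ^ (d - 2)) := by
  rcases eq_or_ne i k with rfl | hik
  · simp [shiftedFermat, pderiv_X, Pi.single_apply, Nat.sub_sub]
    ring
  · simp [shiftedFermat, pderiv_X, Pi.single_apply, Nat.sub_sub, hik, hik.symm]
    ring

theorem hessian_shiftedFermat :
    (of fun i k => eval 0 (pderiv i (pderiv k (shiftedFermat d a b)))) =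
      (d * (d - 1 : ℕ) : R) • (diagonal (fun i => a i ^ (d - 2)) + of fun _ _ => b ^ (d - 2)) := by
  ext i k
  rw [of_apply, eval_zero_pderiv_pderiv_shiftedFermat]
  simp [diagonal_apply]

end MvPolynomial

theorem Matrix.det_diagonal_add_of_const {ι K : Type*} [Fintype ι] [DecidableEq ι] [Field K]
    {a : ι → K} (ha : ∀ i, a i ≠ 0) (c : K) :
    (diagonal a + of fun _ _ => c).det = (∏ i, a i) * (1 + c * ∑ i, (a i)⁻¹) := by
  have hconst : (of fun _ _ => c : Matrix ι ι K) =
      replicateCol Unit (fun _ => c) * replicateRow Unit (fun _ => (1 : K)) := by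
    ext i j
    simp [mul_apply]
  have hdet : IsUnit (diagonal a).det := by
    simpa [isUnit_iff_ne_zero, Finset.prod_ne_zero_iff] using ha
  have hinv : (diagonal a)⁻¹ = diagonal fun i => (a i)⁻¹ :=
    inv_eq_left_inv (by simp [diagonal_mul_diagonal, ha])
  rw [hconst, det_add_replicateCol_mul_replicateRow hdet, hinv, det_diagonal, det_unique]
  simp [mul_apply, diagonal_apply, Finset.mul_sum, mul_comm]

theorem pow_sub_two_eq_inv_of_pow_sub_one_eq_one {K : Type*} [DivisionRing K] {x : K} {d : ℕ}
    (hd : 2 ≤ d) (hx : x ^ (d - 1) = 1) : x ^ (d - 2) = x⁻¹ := by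
  refine eq_inv_of_mul_eq_one_left ?_
  rw [← pow_succ, show d - 2 + 1 = d - 1 by omega, hx]

theorem pow_eq_self_of_pow_sub_one_eq_one {M : Type*} [Monoid M] {x : M} {d : ℕ}
    (hd : 1 ≤ d) (hx : x ^ (d - 1) = 1) : x ^ d = x := by
  rw [← Nat.sub_add_cancel hd, pow_succ, hx, one_mul]

open MvPolynomial in
theorem fermat_singularity_nondegenerate_general (m : ℕ) (d : ℕ) (hd : 2 ≤ d)
    (ξ : Fin (m + 1) → ℂ) (hξ : ∀ j, ξ j ^ (d - 1) = 1)
    (hsum : 1 + ∑ j, ξ j = 0)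
    (f : MvPolynomial (Fin m) ℂ)
    (hf : f = C 1 + ∑ j : Fin m, (X j + C (ξ j.castSucc)) ^ d +
        (C (ξ (Fin.last m)) - ∑ j : Fin m, X j) ^ d) :
    eval (0 : Fin m → ℂ) f = 0 ∧
    (∀ j : Fin m, eval (0 : Fin m → ℂ) (pderiv j f) = 0) ∧
    IsUnit (Matrix.det (Matrix.of fun i j : Fin m =>
      eval (0 : Fin m → ℂ) (pderiv i (pderiv j f)))) := by
  have hξ0 : ∀ j, ξ j ≠ 0 := fun j => ne_zero_pow (by omega) ((hξ j).symm ▸ one_ne_zero)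
  have hξd : ∀ j, ξ j ^ d = ξ j := fun j => pow_eq_self_of_pow_sub_one_eq_one (by omega) (hξ j)
  have hξinv : ∀ j, ξ j ^ (d - 2) = (ξ j)⁻¹ := fun j =>
    pow_sub_two_eq_inv_of_pow_sub_one_eq_one hd (hξ j)
  have hsum_init : ∑ j : Fin m, ξ j.castSucc = -1 - ξ (Fin.last m) := by
    rw [Fin.sum_univ_castSucc] at hsum
    linear_combination hsum
  change f = shiftedFermat d (fun j => ξ j.castSucc) (ξ (Fin.last m)) at hf
  subst hf
  refine ⟨?_, fun j => ?_, ?_⟩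
  · rw [eval_zero_shiftedFermat]
    simp only [hξd, hsum_init]
    ring
  · rw [eval_zero_pderiv_shiftedFermat, hξ, hξ, sub_self]
  · have hdd : (d * (d - 1 : ℕ) : ℂ) ≠ 0 := by norm_cast; exact mul_ne_zero (by omega) (by omega)
    rw [hessian_shiftedFermat, det_smul, det_diagonal_add_of_const (fun j => pow_ne_zero _ (hξ0 _))]
    simp only [hξinv, inv_inv, hsum_init]
    have hlast : 1 + (ξ (Fin.last m))⁻¹ * (-1 - ξ (Fin.last m)) = -(ξ (Fin.last m))⁻¹ := by
      field_simp [hξ0]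
      ring
    rw [hlast, isUnit_iff_ne_zero]
    simp [hdd, hξ0, Finset.prod_ne_zero_iff]

open MvPolynomial in
theorem fermat_singularity_nondegenerate (m : ℕ) (hm : 1 ≤ m) (d : ℕ) (hd : 2 ≤ d)
    (ξ : Fin (m + 1) → ℂ) (hξ : ∀ j, ξ j ^ (d - 1) = 1)
    (hsum : 1 + ∑ j, ξ j = 0)
    (f : MvPolynomial (Fin m) ℂ)
    (hf : f = C 1 + ∑ j : Fin m, (X j + C (ξ j.castSucc)) ^ d +
        (C (ξ (Fin.last m)) - ∑ j : Fin m, X j) ^ d) :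
    eval (0 : Fin m → ℂ) f = 0 ∧
    (∀ j : Fin m, eval (0 : Fin m → ℂ) (pderiv j f) = 0) ∧
    IsUnit (Matrix.det (Matrix.of fun i j : Fin m =>
      eval (0 : Fin m → ℂ) (pderiv i (pderiv j f)))) :=
  fermat_singularity_nondegenerate_general m d hd ξ hξ hsum f hf
end

section
/- If ν = p^r is a power of a prime p and p divides μ+1, then β_{μ,ν} = (1/ν) Σ (μ+1)! / (s_1!···s_k!)^p, where k = ν/p and the sum runs over nonnegative integers s_1,...,s_k with s_1+...+s_k = (μ+1)/p; and if p does not divide μ+1, then β_{μ,ν} = 0. -/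
set_option linter.unusedSectionVars false
set_option linter.unusedVariables false
set_option maxHeartbeats 1000000

/-- The number of μ-tuples of ν-th roots of unity with z₁ + ⋯ + z_μ + 1 = 0. -/
noncomputable def beta (μ ν : ℕ) : ℕ :=
  {z : Fin μ → ℂ | (∀ i, z i ^ ν = 1) ∧ (∑ i, z i) + 1 = 0}.ncard

section Counting
open Finset

variable {α : Type*} [Fintype α] [DecidableEq α]

/-- counts of a function -/
def cnt {m : ℕ} (a : Fin m → α) (x : α) : ℕ := (univ.filter (fun i => a i = x)).card

lemma cnt_comp_perm {m : ℕ} (a : Fin m → α) (σ : Equiv.Perm (Fin m)) (x : α) :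
    cnt (a ∘ σ) x = cnt a x := by
  simp only [cnt, ← Fintype.card_subtype]
  exact Fintype.card_congr (Equiv.subtypeEquiv σ fun i => Iff.rfl)

lemma sum_cnt {m : ℕ} (a : Fin m → α) : ∑ x, cnt a x = m := by
  simp only [cnt]
  rw [← Finset.card_eq_sum_card_fiberwise (fun i _ => mem_univ (a i))]
  simp

lemma exists_fn_of_counts {m : ℕ} (C : α → ℕ) (h : ∑ x, C x = m) :
    ∃ a : Fin m → α, ∀ x, cnt a x = C x := by
  have hcard : Fintype.card (Σ x : α, Fin (C x)) = Fintype.card (Fin m) := by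
    simp [Fintype.card_sigma, h]
  obtain ⟨e0⟩ := Fintype.card_eq.mp hcard
  refine ⟨fun i => (e0.symm i).1, fun x => ?_⟩
  have : cnt (fun i => (e0.symm i).1) x = Fintype.card {i : Fin m // (e0.symm i).1 = x} := by
    rw [cnt, Fintype.card_subtype]
  rw [this]
  have e1 : {i : Fin m // (e0.symm i).1 = x} ≃ {y : Σ x : α, Fin (C x) // y.1 = x} :=
    e0.symm.subtypeEquiv fun i => Iff.rfl
  rw [Fintype.card_congr e1]
  have e2 : {y : Σ x : α, Fin (C x) // y.1 = x} ≃ Fin (C x) := by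
    refine Equiv.ofBijective (fun y => y.1.2.cast (by rw [y.2])) ⟨?_, ?_⟩
    · rintro ⟨⟨x1, j1⟩, rfl⟩ ⟨⟨x2, j2⟩, h2⟩ hj
      obtain rfl : x2 = x1 := h2
      simpa using hj
    · rintro j
      exact ⟨⟨⟨x, j⟩, rfl⟩, rfl⟩
  simp [Fintype.card_congr e2]

lemma exists_perm_of_counts_eq {m : ℕ} (a0 a : Fin m → α)
    (h : ∀ x, cnt a x = cnt a0 x) : ∃ σ : Equiv.Perm (Fin m), a0 ∘ σ = a := by
  have E : ∀ x, {i : Fin m // a i = x} ≃ {i : Fin m // a0 i = x} := fun x =>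
    Fintype.equivOfCardEq (by
      rw [Fintype.card_subtype, Fintype.card_subtype]
      exact h x)
  refine ⟨(Equiv.sigmaFiberEquiv a).symm.trans
    ((Equiv.sigmaCongrRight E).trans (Equiv.sigmaFiberEquiv a0)), funext fun i => ?_⟩
  simp only [Function.comp_apply, Equiv.trans_apply, Equiv.sigmaFiberEquiv,
    Equiv.sigmaCongrRight, Equiv.coe_fn_mk, Equiv.coe_fn_symm_mk]
  exact ((E (a i)) ⟨i, rfl⟩).2

theorem card_counts_mul (m : ℕ) (C : α → ℕ) (h : ∑ x, C x = m) :
    Fintype.card {a : Fin m → α // ∀ x, cnt a x = C x} * ∏ x, (C x).factorial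
      = m.factorial := by
  classical
  obtain ⟨a0, ha0⟩ := exists_fn_of_counts C h
  have key : ∀ a : Fin m → α, Fintype.card {σ : Equiv.Perm (Fin m) // a0 ∘ σ = a} =
      if ∀ x, cnt a x = C x then ∏ x, (C x).factorial else 0 := by
    intro a
    split_ifs with hP
    · obtain ⟨σ1, hσ1⟩ := exists_perm_of_counts_eq a0 a
        (fun x => (hP x).trans (ha0 x).symm)
      have e : {τ : Equiv.Perm (Fin m) // a0 ∘ τ = a0} ≃
          {σ : Equiv.Perm (Fin m) // a0 ∘ σ = a} := by
        refine Equiv.subtypeEquiv (Equiv.mulRight σ1) (fun τ => ?_)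
        constructor
        · intro ht
          funext i
          have h1 : a0 (τ (σ1 i)) = a0 (σ1 i) := congrFun ht (σ1 i)
          have h2 : a0 (σ1 i) = a i := congrFun hσ1 i
          simpa [Equiv.Perm.mul_apply] using h1.trans h2
        · intro hs
          funext i
          have h1 : a0 (τ (σ1 (σ1.symm i))) = a (σ1.symm i) := by
            simpa [Equiv.Perm.mul_apply] using congrFun hs (σ1.symm i)
          have h2 : a (σ1.symm i) = a0 (σ1 (σ1.symm i)) := (congrFun hσ1 _).symm
          simpa using h1.trans h2
      rw [← Fintype.card_congr e, DomMulAct.stabilizer_card a0]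
      refine Finset.prod_congr rfl fun x _ => ?_
      rw [Fintype.card_subtype]
      exact congrArg Nat.factorial (ha0 x)
    · refine Fintype.card_eq_zero_iff.mpr ⟨fun ⟨σ, hσ⟩ => hP fun x => ?_⟩
      rw [← hσ, cnt_comp_perm, ha0]
  have h1 : m.factorial = ∑ a : Fin m → α,
      Fintype.card {σ : Equiv.Perm (Fin m) // a0 ∘ σ = a} := by
    rw [← Fintype.card_sigma,
      Fintype.card_congr (Equiv.sigmaFiberEquiv (fun σ : Equiv.Perm (Fin m) => a0 ∘ σ))]
    simp [Fintype.card_perm]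
  rw [h1]
  simp only [key]
  rw [← Finset.sum_filter, Finset.sum_const, smul_eq_mul, Fintype.card_subtype]

end Counting

section RootsAll
open Finset Polynomial

variable {ζ : ℂ} {ν k p : ℕ}

lemma zeta_pow_mod (hζ : IsPrimitiveRoot ζ ν) (hν : 0 < ν) (n : ℕ) :
    ζ ^ n = ζ ^ (n % ν) := by
  conv_lhs => rw [← Nat.div_add_mod n ν]
  rw [pow_add, pow_mul, hζ.pow_eq_one, one_pow, one_mul]

lemma zeta_pow_val_natCast (hζ : IsPrimitiveRoot ζ ν) (hν : 0 < ν) (n : ℕ) :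
    ζ ^ ((n : ZMod ν).val) = ζ ^ n := by
  haveI : NeZero ν := ⟨hν.ne'⟩
  rw [ZMod.val_natCast, ← zeta_pow_mod hζ hν]

lemma zeta_pow_val_add (hζ : IsPrimitiveRoot ζ ν) (hν : 0 < ν) (x y : ZMod ν) :
    ζ ^ ((x + y).val) = ζ ^ x.val * ζ ^ y.val := by
  haveI : NeZero ν := ⟨hν.ne'⟩
  have : ((x.val + y.val : ℕ) : ZMod ν) = x + y := by
    push_cast
    rw [ZMod.natCast_val, ZMod.natCast_val, ZMod.cast_id, ZMod.cast_id]
  rw [← this, zeta_pow_val_natCast hζ hν, pow_add]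


lemma pair_lt (hk : ν = k * p) {t j : ℕ} (ht : t < k) (hj : j < p) : t + j * k < ν := by
  calc t + j * k < k + j * k := by omega
    _ ≤ k + (p - 1) * k := by
        have : j ≤ p - 1 := by omega
        exact Nat.add_le_add_left (Nat.mul_le_mul_right k this) k
    _ = p * k := by
        cases p with
        | zero => omega
        | succ q => rw [Nat.succ_sub_one]; ring
    _ = ν := by rw [hk, mul_comm]

/-- reindex a sum over `ZMod ν` by pairs `(t, j)` with `t < k`, `j < p`. -/
lemma sum_zmod_pairs {M : Type*} [AddCommMonoid M] [NeZero ν] (hk : ν = k * p)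
    (hk0 : 0 < k) (f : ZMod ν → M) :
    ∑ e : ZMod ν, f e = ∑ t ∈ range k, ∑ j ∈ range p, f ((t + j * k : ℕ) : ZMod ν) := by
  have hν0 : 0 < ν := Nat.pos_of_ne_zero (NeZero.ne ν)
  rw [← Finset.sum_product']
  refine Finset.sum_nbij' (fun e => (e.val % k, e.val / k))
    (fun x => ((x.1 + x.2 * k : ℕ) : ZMod ν)) ?_ ?_ ?_ ?_ ?_
  · intro e _
    have h1 : e.val < ν := ZMod.val_lt e
    simp only [Finset.mem_product, Finset.mem_range]
    constructor
    · exact Nat.mod_lt _ hk0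
    · rw [Nat.div_lt_iff_lt_mul hk0, mul_comm, ← hk]; exact h1
  · intro x _; exact Finset.mem_univ _
  · intro e _
    show ((e.val % k + e.val / k * k : ℕ) : ZMod ν) = e
    rw [Nat.mod_add_div' e.val k, ZMod.natCast_val, ZMod.cast_id]
  · rintro ⟨t, j⟩ hx
    simp only [Finset.mem_product, Finset.mem_range] at hx
    have hbound : t + j * k < ν := pair_lt hk hx.1 hx.2
    have hv : ((t + j * k : ℕ) : ZMod ν).val = t + j * k := ZMod.val_cast_of_lt hbound
    simp only [hv, Prod.mk.injEq]
    constructor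
    · rw [Nat.add_mul_mod_self_right, Nat.mod_eq_of_lt hx.1]
    · rw [Nat.add_mul_div_right _ _ hk0, Nat.div_eq_of_lt hx.1, zero_add]
  · intro e _
    have h : ((e.val % k + e.val / k * k : ℕ) : ZMod ν) = e := by
      rw [Nat.mod_add_div' e.val k, ZMod.natCast_val, ZMod.cast_id]
    show f e = f ((e.val % k + e.val / k * k : ℕ) : ZMod ν)
    rw [h]

theorem sum_roots_eq_zero_iff [NeZero ν] (hζ : IsPrimitiveRoot ζ ν) (hk : ν = k * p)
    (hp2 : 2 ≤ p) (hk0 : 0 < k) (htot : ν.totient = k * (p - 1)) (c : ZMod ν → ℕ) :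
    (∑ e : ZMod ν, (c e : ℂ) * ζ ^ e.val) = 0 ↔
      ∀ e : ZMod ν, c e = c (e + (k : ZMod ν)) := by
  have hν0 : 0 < ν := Nat.pos_of_ne_zero (NeZero.ne ν)
  obtain ⟨q, hq⟩ : ∃ q, p = q + 1 := ⟨p - 1, by omega⟩
  have hq1 : 1 ≤ q := by omega
  have hgeom : ∑ j ∈ range p, ζ ^ (j * k) = 0 := by
    have h1 : IsPrimitiveRoot (ζ ^ k) p := hζ.pow hν0 hk
    have h2 := h1.geom_sum_eq_zero (by omega)
    calc ∑ j ∈ range p, ζ ^ (j * k) = ∑ j ∈ range p, (ζ ^ k) ^ j := by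
          refine sum_congr rfl fun j _ => ?_
          rw [← pow_mul, mul_comm]
      _ = 0 := h2
  have hreidx : (∑ e : ZMod ν, (c e : ℂ) * ζ ^ e.val) =
      ∑ t ∈ range k, ∑ j ∈ range p,
        (c ((t + j * k : ℕ) : ZMod ν) : ℂ) * ζ ^ (t + j * k) := by
    rw [sum_zmod_pairs hk hk0]
    refine sum_congr rfl fun t ht => sum_congr rfl fun j hj => ?_
    rw [ZMod.val_cast_of_lt (pair_lt hk (mem_range.mp ht) (mem_range.mp hj))]
  constructor
  · intro h
    rw [hreidx] at h
    have hzq : ζ ^ (q * k) = -∑ j ∈ range q, ζ ^ (j * k) := by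
      rw [hq, sum_range_succ] at hgeom
      exact eq_neg_of_add_eq_zero_right hgeom
    have key : ∀ t ∈ range k,
        ∑ j ∈ range q, ((c ((t + j * k : ℕ) : ZMod ν) : ℂ) -
            (c ((t + q * k : ℕ) : ZMod ν) : ℂ)) * ζ ^ (t + j * k)
          = ∑ j ∈ range p, (c ((t + j * k : ℕ) : ZMod ν) : ℂ) * ζ ^ (t + j * k) := by
      intro t _
      rw [hq, sum_range_succ]
      have hz : ζ ^ (t + q * k) = -∑ j ∈ range q, ζ ^ (t + j * k) := by
        rw [pow_add, hzq, mul_neg, mul_sum]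
        congr 1
        exact sum_congr rfl fun j _ => by rw [← pow_add]
      rw [hz]
      rw [mul_neg, mul_sum]
      simp only [sub_mul, Finset.sum_sub_distrib]
      rw [sub_eq_add_neg]
    have h2 : ∑ t ∈ range k, ∑ j ∈ range q,
        ((c ((t + j * k : ℕ) : ZMod ν) : ℂ) -
          (c ((t + q * k : ℕ) : ZMod ν) : ℂ)) * ζ ^ (t + j * k) = 0 := by
      rw [Finset.sum_congr rfl key]
      exact h
    set P : Polynomial ℚ := ∑ t ∈ range k, ∑ j ∈ range q,
        Polynomial.C ((c ((t + j * k : ℕ) : ZMod ν) : ℚ) -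
          (c ((t + q * k : ℕ) : ZMod ν) : ℚ)) * Polynomial.X ^ (t + j * k) with hP
    have hPeval : Polynomial.aeval ζ P = 0 := by
      rw [hP]
      simp only [map_sum, map_mul, Polynomial.aeval_C, map_pow, Polynomial.aeval_X,
        map_sub, map_natCast]
      exact h2
    have hP0 : P = 0 := by
      by_contra hne
      have hdvd := minpoly.dvd ℚ ζ hPeval
      have hle := Polynomial.natDegree_le_of_dvd hdvd hne
      have hmp : (minpoly ℚ ζ).natDegree = ν.totient := by
        rw [← Polynomial.cyclotomic_eq_minpoly_rat hζ hν0, Polynomial.natDegree_cyclotomic]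
      have hdeg : P.natDegree ≤ k * q - 1 := by
        rw [hP]
        refine Polynomial.natDegree_sum_le_of_forall_le _ _ fun t ht => ?_
        refine Polynomial.natDegree_sum_le_of_forall_le _ _ fun j hj => ?_
        refine le_trans (Polynomial.natDegree_C_mul_le _ _) ?_
        rw [Polynomial.natDegree_X_pow]
        have ht' := mem_range.mp ht
        have hj' := mem_range.mp hj
        have hb : t + j * k ≤ (k - 1) + (q - 1) * k :=
          Nat.add_le_add (by omega) (Nat.mul_le_mul_right _ (by omega))
        have he : (k - 1) + (q - 1) * k = k * q - 1 := by
          obtain ⟨q', rfl⟩ : ∃ q', q = q' + 1 := ⟨q - 1, by omega⟩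
          rw [Nat.add_sub_cancel]
          have : k * (q' + 1) = k + q' * k := by ring
          omega
        omega
      rw [hmp, htot] at hle
      have hpq : p - 1 = q := by omega
      rw [hpq] at hle
      have hkq : 0 < k * q := Nat.mul_pos hk0 (by omega)
      omega
    have hcc : ∀ t, t < k → ∀ j, j < q →
        c ((t + j * k : ℕ) : ZMod ν) = c ((t + q * k : ℕ) : ZMod ν) := by
      intro t ht j hj
      have h3 : P.coeff (t + j * k) = (c ((t + j * k : ℕ) : ZMod ν) : ℚ) -
          (c ((t + q * k : ℕ) : ZMod ν) : ℚ) := by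
        rw [hP, Polynomial.finset_sum_coeff]
        rw [Finset.sum_eq_single t]
        · rw [Polynomial.finset_sum_coeff, Finset.sum_eq_single j]
          · rw [Polynomial.coeff_C_mul, Polynomial.coeff_X_pow, if_pos rfl, mul_one]
          · intro j' hj' hne
            rw [Polynomial.coeff_C_mul, Polynomial.coeff_X_pow, if_neg, mul_zero]
            intro heq
            have : j' * k = j * k := by omega
            exact hne (Nat.eq_of_mul_eq_mul_right hk0 this)
          · intro hj''
            exact absurd (mem_range.mpr hj) hj''
        · intro t' ht' hne
          rw [Polynomial.finset_sum_coeff]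
          refine Finset.sum_eq_zero fun j' hj' => ?_
          rw [Polynomial.coeff_C_mul, Polynomial.coeff_X_pow, if_neg, mul_zero]
          intro heq
          have e1 : (t' + j' * k) % k = (t + j * k) % k := by rw [heq]
          rw [Nat.add_mul_mod_self_right, Nat.add_mul_mod_self_right,
            Nat.mod_eq_of_lt (mem_range.mp ht'), Nat.mod_eq_of_lt ht] at e1
          exact hne e1
        · intro ht''
          exact absurd (mem_range.mpr ht) ht''
      rw [hP0, Polynomial.coeff_zero] at h3
      have h4 : (c ((t + j * k : ℕ) : ZMod ν) : ℚ) =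
          (c ((t + q * k : ℕ) : ZMod ν) : ℚ) := by linarith [h3.symm]
      exact_mod_cast h4
    have hfull : ∀ t, t < k → ∀ j, j < p →
        c ((t + j * k : ℕ) : ZMod ν) = c ((t + q * k : ℕ) : ZMod ν) := by
      intro t ht j hj
      rcases eq_or_lt_of_le (Nat.lt_succ_iff.mp (hq ▸ hj)) with he | hlt
      · rw [he]
      · exact hcc t ht j hlt
    intro e
    set t := e.val % k with htdef
    set j := e.val / k with hjdef
    have hte : t < k := Nat.mod_lt _ hk0
    have hje : j < p := by
      rw [hjdef, Nat.div_lt_iff_lt_mul hk0, mul_comm, ← hk]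
      exact ZMod.val_lt e
    have he : e = ((t + j * k : ℕ) : ZMod ν) := by
      rw [htdef, hjdef, Nat.mod_add_div' e.val k, ZMod.natCast_val, ZMod.cast_id]
    by_cases hjq : j < q
    · have h4 : e + (k : ZMod ν) = ((t + (j + 1) * k : ℕ) : ZMod ν) := by
        rw [he]; push_cast; ring
      rw [h4, he, hfull t hte j hje, hfull t hte (j + 1) (by omega)]
    · have hjq' : j = q := by omega
      have h5 : ((q * k + k : ℕ) : ZMod ν) = 0 := by
        have : q * k + k = ν := by rw [hk, hq]; ring
        rw [this, ZMod.natCast_self]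
      have h4 : e + (k : ZMod ν) = ((t : ℕ) : ZMod ν) := by
        rw [he, hjq']
        push_cast at h5 ⊢
        linear_combination h5
      rw [h4, he, hjq']
      have h6 := hfull t hte 0 (by omega)
      simp only [zero_mul, add_zero] at h6
      exact (h6).symm
  · intro hcond
    have hiter : ∀ (e : ZMod ν) (j : ℕ), c (e + ((j * k : ℕ) : ZMod ν)) = c e := by
      intro e j
      induction j with
      | zero => simp
      | succ n ih =>
          have hstep : (((n + 1) * k : ℕ) : ZMod ν) =
              ((n * k : ℕ) : ZMod ν) + (k : ZMod ν) := by push_cast; ring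
          rw [hstep, ← add_assoc, ← hcond (e + ((n * k : ℕ) : ZMod ν)), ih]
    rw [hreidx]
    refine Finset.sum_eq_zero fun t ht => ?_
    have hct : ∀ j ∈ range p, (c ((t + j * k : ℕ) : ZMod ν) : ℂ) =
        (c ((t : ℕ) : ZMod ν) : ℂ) := by
      intro j _
      congr 1
      have : ((t + j * k : ℕ) : ZMod ν) = ((t : ℕ) : ZMod ν) + ((j * k : ℕ) : ZMod ν) := by
        push_cast; ring
      rw [this, hiter]
    calc ∑ j ∈ range p, (c ((t + j * k : ℕ) : ZMod ν) : ℂ) * ζ ^ (t + j * k)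
        = ∑ j ∈ range p, (c ((t : ℕ) : ZMod ν) : ℂ) * ζ ^ t * ζ ^ (j * k) := by
          refine sum_congr rfl fun j hj => ?_
          rw [hct j hj, pow_add, mul_assoc]
      _ = (c ((t : ℕ) : ZMod ν) : ℂ) * ζ ^ t * ∑ j ∈ range p, ζ ^ (j * k) := by
          rw [← mul_sum]
      _ = 0 := by rw [hgeom, mul_zero]


end RootsAll

section Glue
open Finset
variable {ν k p : ℕ} {ζ : ℂ}

lemma prod_zmod_pairs {M : Type*} [CommMonoid M] [NeZero ν] (hk : ν = k * p)
    (hk0 : 0 < k) (f : ZMod ν → M) :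
    ∏ e : ZMod ν, f e = ∏ t ∈ range k, ∏ j ∈ range p, f ((t + j * k : ℕ) : ZMod ν) := by
  have hν0 : 0 < ν := Nat.pos_of_ne_zero (NeZero.ne ν)
  rw [← Finset.prod_product']
  refine Finset.prod_nbij' (fun e => (e.val % k, e.val / k))
    (fun x => ((x.1 + x.2 * k : ℕ) : ZMod ν)) ?_ ?_ ?_ ?_ ?_
  · intro e _
    have h1 : e.val < ν := ZMod.val_lt e
    simp only [Finset.mem_product, Finset.mem_range]
    exact ⟨Nat.mod_lt _ hk0, by rw [Nat.div_lt_iff_lt_mul hk0, mul_comm, ← hk]; exact h1⟩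
  · intro x _; exact Finset.mem_univ _
  · intro e _
    show ((e.val % k + e.val / k * k : ℕ) : ZMod ν) = e
    rw [Nat.mod_add_div' e.val k, ZMod.natCast_val, ZMod.cast_id]
  · rintro ⟨t, j⟩ hx
    simp only [Finset.mem_product, Finset.mem_range] at hx
    have hv : ((t + j * k : ℕ) : ZMod ν).val = t + j * k :=
      ZMod.val_cast_of_lt (pair_lt hk hx.1 hx.2)
    simp only [hv, Prod.mk.injEq]
    exact ⟨by rw [Nat.add_mul_mod_self_right, Nat.mod_eq_of_lt hx.1],
      by rw [Nat.add_mul_div_right _ _ hk0, Nat.div_eq_of_lt hx.1, zero_add]⟩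
  · intro e _
    have h : ((e.val % k + e.val / k * k : ℕ) : ZMod ν) = e := by
      rw [Nat.mod_add_div' e.val k, ZMod.natCast_val, ZMod.cast_id]
    show f e = f ((e.val % k + e.val / k * k : ℕ) : ZMod ν)
    rw [h]

lemma beta_card [NeZero ν] (hζ : IsPrimitiveRoot ζ ν) (μ : ℕ) :
    beta μ ν = Nat.card {a : Fin μ → ZMod ν // (∑ i, ζ ^ (a i).val) + 1 = 0} := by
  classical
  have hν0 : 0 < ν := Nat.pos_of_ne_zero (NeZero.ne ν)
  rw [beta, ← Nat.card_coe_set_eq]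
  refine (Nat.card_congr (Equiv.ofBijective
    (fun x : {a : Fin μ → ZMod ν // (∑ i, ζ ^ (a i).val) + 1 = 0} =>
      (⟨fun i => ζ ^ ((x.1 i).val), ⟨fun i => by
          rw [← pow_mul, mul_comm, pow_mul, hζ.pow_eq_one, one_pow], x.2⟩⟩ :
        {z : Fin μ → ℂ | (∀ i, z i ^ ν = 1) ∧ (∑ i, z i) + 1 = 0})) ⟨?_, ?_⟩)).symm
  · intro x y h
    have h' : ∀ i, ζ ^ ((x.1 i).val) = ζ ^ ((y.1 i).val) := fun i =>
      congrFun (congrArg Subtype.val h) i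
    refine Subtype.ext (funext fun i => ?_)
    have := hζ.pow_inj (ZMod.val_lt (x.1 i)) (ZMod.val_lt (y.1 i)) (h' i)
    exact ZMod.val_injective ν this
  · rintro ⟨z, hz1, hz2⟩
    choose j hj hj2 using fun i => hζ.eq_pow_of_pow_eq_one (hz1 i)
    have hval : ∀ i, (((j i : ℕ) : ZMod ν)).val = j i := fun i =>
      ZMod.val_cast_of_lt (hj i)
    have hzz : ∀ i, ζ ^ (((j i : ℕ) : ZMod ν)).val = z i := fun i => by
      rw [hval i, hj2 i]
    refine ⟨⟨fun i => ((j i : ℕ) : ZMod ν), ?_⟩, ?_⟩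
    · rw [Finset.sum_congr rfl fun i _ => hzz i]
      exact hz2
    · exact Subtype.ext (funext fun i => hzz i)

lemma step_B [NeZero ν] (hζ : IsPrimitiveRoot ζ ν) (μ : ℕ) :
    Nat.card {b : Fin (μ + 1) → ZMod ν // (∑ i, ζ ^ ((b i).val)) = 0}
      = ν * Nat.card {a : Fin μ → ZMod ν // (∑ i, ζ ^ (a i).val) + 1 = 0} := by
  classical
  have hν0 : 0 < ν := Nat.pos_of_ne_zero (NeZero.ne ν)
  have hζ0 : ζ ≠ 0 := hζ.ne_zero hν0.ne'
  have pf1 : ∀ (b : Fin (μ + 1) → ZMod ν), (∑ i, ζ ^ ((b i).val)) = 0 →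
      (∑ i : Fin μ, ζ ^ ((b i.castSucc - b (Fin.last μ)).val)) + 1 = 0 := by
    intro b hQ
    set w := b (Fin.last μ) with hw
    have hmul : ((∑ i : Fin μ, ζ ^ ((b i.castSucc - w).val)) + 1) * ζ ^ w.val
        = ∑ i : Fin (μ + 1), ζ ^ ((b i).val) := by
      rw [add_mul, one_mul, Finset.sum_mul,
        Fin.sum_univ_castSucc (fun i => ζ ^ ((b i).val))]
      congr 1
      refine Finset.sum_congr rfl fun i _ => ?_
      rw [← zeta_pow_val_add hζ hν0, sub_add_cancel]
    have h0 := hmul.trans hQ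
    rcases mul_eq_zero.mp h0 with h | h
    · exact h
    · exact absurd h (pow_ne_zero _ hζ0)
  have pf2 : ∀ (w : ZMod ν) (a : Fin μ → ZMod ν), (∑ i, ζ ^ (a i).val) + 1 = 0 →
      (∑ i : Fin (μ + 1), ζ ^ (((Fin.snoc (fun i => a i + w) w : Fin (μ+1) → ZMod ν) i).val)) = 0 := by
    intro w a hP
    rw [Fin.sum_univ_castSucc]
    simp only [Fin.snoc_castSucc, Fin.snoc_last]
    have : ∀ i : Fin μ, ζ ^ ((a i + w).val) = ζ ^ ((a i).val) * ζ ^ w.val := fun i =>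
      zeta_pow_val_add hζ hν0 _ _
    rw [Finset.sum_congr rfl fun i _ => this i, ← Finset.sum_mul]
    have : (∑ i : Fin μ, ζ ^ (a i).val) * ζ ^ w.val + ζ ^ w.val
        = ((∑ i : Fin μ, ζ ^ (a i).val) + 1) * ζ ^ w.val := by ring
    rw [this, hP, zero_mul]
  have E : {b : Fin (μ + 1) → ZMod ν // (∑ i, ζ ^ ((b i).val)) = 0}
      ≃ ZMod ν × {a : Fin μ → ZMod ν // (∑ i, ζ ^ (a i).val) + 1 = 0} := by
    refine ⟨fun x => ⟨x.1 (Fin.last μ),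
        ⟨fun i => x.1 i.castSucc - x.1 (Fin.last μ), pf1 x.1 x.2⟩⟩,
      fun y => ⟨Fin.snoc (fun i => y.2.1 i + y.1) y.1, pf2 y.1 y.2.1 y.2.2⟩, ?_, ?_⟩
    · intro x
      refine Subtype.ext (funext fun i => ?_)
      refine Fin.lastCases ?_ (fun i => ?_) i
      · simp [Fin.snoc_last]
      · simp [Fin.snoc_castSucc]
    · rintro ⟨w, a, ha⟩
      refine Prod.ext ?_ ?_
      · simp [Fin.snoc_last]
      · refine Subtype.ext (funext fun i => ?_)
        simp [Fin.snoc_castSucc, Fin.snoc_last]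
  rw [Nat.card_congr E, Nat.card_prod, Nat.card_zmod]

lemma cond_iff_cnt [NeZero ν] (hζ : IsPrimitiveRoot ζ ν) (hk : ν = k * p)
    (hp2 : 2 ≤ p) (hk0 : 0 < k) (htot : ν.totient = k * (p - 1)) {m : ℕ}
    (b : Fin m → ZMod ν) :
    (∑ i, ζ ^ ((b i).val)) = 0 ↔ ∀ e, cnt b e = cnt b (e + (k : ZMod ν)) := by
  classical
  have hsum : (∑ i, ζ ^ ((b i).val)) = ∑ e : ZMod ν, (cnt b e : ℂ) * ζ ^ e.val := by
    rw [← Finset.sum_fiberwise_of_maps_to (fun i (_ : i ∈ univ) => Finset.mem_univ (b i))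
      (fun i => ζ ^ ((b i).val))]
    refine Finset.sum_congr rfl fun e _ => ?_
    have : ∀ i ∈ univ.filter (fun i => b i = e), ζ ^ ((b i).val) = ζ ^ e.val := by
      intro i hi
      rw [(Finset.mem_filter.mp hi).2]
    rw [Finset.sum_congr rfl this, Finset.sum_const, nsmul_eq_mul]
    rfl
  rw [hsum]
  exact sum_roots_eq_zero_iff hζ hk hp2 hk0 htot (cnt b)

lemma cnt_invariant [NeZero ν] {m : ℕ} (b : Fin m → ZMod ν)
    (hb : ∀ e, cnt b e = cnt b (e + (k : ZMod ν))) (e : ZMod ν) (j : ℕ) :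
    cnt b (e + ((j * k : ℕ) : ZMod ν)) = cnt b e := by
  induction j with
  | zero => simp
  | succ n ih =>
      have hstep : (((n + 1) * k : ℕ) : ZMod ν) =
          ((n * k : ℕ) : ZMod ν) + (k : ZMod ν) := by push_cast; ring
      rw [hstep, ← add_assoc, ← hb (e + ((n * k : ℕ) : ZMod ν)), ih]

lemma sum_cnt_base [NeZero ν] (hk : ν = k * p) (hk0 : 0 < k) {m : ℕ}
    (b : Fin m → ZMod ν) (hb : ∀ e, cnt b e = cnt b (e + (k : ZMod ν))) :
    p * ∑ t ∈ range k, cnt b ((t : ℕ) : ZMod ν) = m := by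
  have h1 := sum_cnt b
  rw [sum_zmod_pairs hk hk0 (fun e => cnt b e)] at h1
  calc p * ∑ t ∈ range k, cnt b ((t : ℕ) : ZMod ν)
      = ∑ t ∈ range k, ∑ j ∈ range p, cnt b ((t + j * k : ℕ) : ZMod ν) := by
        rw [Finset.mul_sum]
        refine Finset.sum_congr rfl fun t _ => ?_
        have hterm : ∀ j ∈ range p, cnt b ((t + j * k : ℕ) : ZMod ν)
            = cnt b ((t : ℕ) : ZMod ν) := by
          intro j _
          have hcast : ((t + j * k : ℕ) : ZMod ν)
              = ((t : ℕ) : ZMod ν) + ((j * k : ℕ) : ZMod ν) := by push_cast; ring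
          rw [hcast, cnt_invariant b hb]
        rw [Finset.sum_congr rfl hterm, Finset.sum_const, card_range, smul_eq_mul, mul_comm]
    _ = m := h1

lemma count_D [NeZero ν] (hk : ν = k * p) (hk0 : 0 < k) (hp2 : 2 ≤ p) (m : ℕ)
    (hm : p ∣ m) :
    Fintype.card {b : Fin m → ZMod ν // ∀ e, cnt b e = cnt b (e + (k : ZMod ν))} =
      ∑ s ∈ Finset.Nat.antidiagonalTuple k (m / p),
        Nat.factorial m / (∏ i, Nat.factorial (s i)) ^ p := by
  classical
  have hν0 : 0 < ν := Nat.pos_of_ne_zero (NeZero.ne ν)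
  have hkν : k < ν := by
    rw [hk]
    exact (Nat.lt_mul_iff_one_lt_right hk0).mpr (by omega)
  set ψ : (Fin m → ZMod ν) → (Fin k → ℕ) :=
    (fun b => fun t => cnt b ((t : ℕ) : ZMod ν)) with hψdef
  set P : (Fin m → ZMod ν) → Prop :=
    (fun b => ∀ e, cnt b e = cnt b (e + (k : ZMod ν))) with hPdef
  rw [Fintype.card_subtype]
  rw [Finset.card_eq_sum_card_fiberwise
    (f := ψ) (t := Finset.Nat.antidiagonalTuple k (m / p)) ?hmaps]
  case hmaps =>
    intro b hb
    rw [Finset.mem_coe, Finset.mem_filter] at hb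
    rw [Finset.mem_coe, Finset.Nat.mem_antidiagonalTuple]
    have hbase := sum_cnt_base hk hk0 b hb.2
    have h1 : ∑ t : Fin k, ψ b t = ∑ t ∈ range k, cnt b ((t : ℕ) : ZMod ν) :=
      Fin.sum_univ_eq_sum_range (fun t => cnt b ((t : ℕ) : ZMod ν)) k
    rw [h1]
    exact (Nat.div_eq_of_eq_mul_left (by omega) (by rw [mul_comm]; exact hbase.symm)).symm
  refine Finset.sum_congr rfl fun s hs => ?_
  have hsm : ∑ i, s i = m / p := Finset.Nat.mem_antidiagonalTuple.mp hs
  set g : ℕ → ℕ := (fun n => s ⟨n % k, Nat.mod_lt n hk0⟩) with hg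
  set Cs : ZMod ν → ℕ := (fun e => g e.val) with hCs
  have hg_add : ∀ t j : ℕ, g (t + j * k) = g t := by
    intro t j
    simp only [hg]
    congr 1
    exact Fin.ext (by simp [Nat.add_mul_mod_self_right])
  have hg_fin : ∀ t : Fin k, g (t : ℕ) = s t := by
    intro t
    simp only [hg]
    congr 1
    exact Fin.ext (by simp [Nat.mod_eq_of_lt t.isLt])
  have hCs_cast : ∀ n : ℕ, n < ν → Cs ((n : ℕ) : ZMod ν) = g n := by
    intro n hn
    simp only [hCs]
    rw [ZMod.val_cast_of_lt hn]
  have hfib : Finset.filter (fun b => ψ b = s) (Finset.filter P univ)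
      = Finset.filter (fun b => ∀ e, cnt b e = Cs e) univ := by
    rw [Finset.filter_filter]
    refine Finset.filter_congr fun b _ => ?_
    constructor
    · rintro ⟨hPb, hψ⟩ e
      have hinv := cnt_invariant b hPb
      have hdec : e = ((e.val % k : ℕ) : ZMod ν) + (((e.val / k) * k : ℕ) : ZMod ν) := by
        have h1 : ((e.val % k + e.val / k * k : ℕ) : ZMod ν) = e := by
          rw [Nat.mod_add_div' e.val k, ZMod.natCast_val, ZMod.cast_id]
        conv_lhs => rw [← h1]
        push_cast
        ring
      have h3 : cnt b e = cnt b ((e.val % k : ℕ) : ZMod ν) := by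
        conv_lhs => rw [hdec]
        exact hinv _ _
      rw [h3]
      exact congrFun hψ ⟨e.val % k, Nat.mod_lt _ hk0⟩
    · intro hC
      constructor
      · intro e
        have hvk : ((k : ℕ) : ZMod ν).val = k := ZMod.val_cast_of_lt hkν
        have h1 : (e + (k : ZMod ν)).val = (e.val + k) % ν := by
          rw [ZMod.val_add, hvk]
        rw [hC e, hC (e + (k : ZMod ν))]
        simp only [hCs, h1, hg]
        congr 1
        refine Fin.ext ?_
        show e.val % k = (e.val + k) % ν % k
        rw [Nat.mod_mod_of_dvd _ ⟨p, hk⟩, Nat.add_mod_right]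
      · funext t
        show cnt b ((t : ℕ) : ZMod ν) = s t
        calc cnt b ((t : ℕ) : ZMod ν) = Cs ((t : ℕ) : ZMod ν) := hC _
          _ = g (t : ℕ) := hCs_cast _ (lt_trans t.isLt hkν)
          _ = s t := hg_fin t
  rw [hfib]
  have hCsum : ∑ e, Cs e = m := by
    rw [sum_zmod_pairs hk hk0 Cs]
    have h1 : ∀ t ∈ range k, ∑ j ∈ range p, Cs ((t + j * k : ℕ) : ZMod ν) = p * g t := by
      intro t ht
      have h2 : ∀ j ∈ range p, Cs ((t + j * k : ℕ) : ZMod ν) = g t := by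
        intro j hj
        rw [hCs_cast _ (pair_lt hk (mem_range.mp ht) (mem_range.mp hj)), hg_add]
      rw [Finset.sum_congr rfl h2, Finset.sum_const, card_range, smul_eq_mul]
    rw [Finset.sum_congr rfl h1, ← Finset.mul_sum]
    have h3 : ∑ t ∈ range k, g t = ∑ t : Fin k, s t := by
      rw [← Fin.sum_univ_eq_sum_range g k]
      exact Finset.sum_congr rfl fun t _ => hg_fin t
    rw [h3, hsm, Nat.mul_div_cancel' hm]
  have hprod : ∏ e, (Cs e).factorial = (∏ i, (s i).factorial) ^ p := by
    rw [prod_zmod_pairs hk hk0 (fun e => (Cs e).factorial)]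
    have h1 : ∀ t ∈ range k, ∏ j ∈ range p, (Cs ((t + j * k : ℕ) : ZMod ν)).factorial
        = (g t).factorial ^ p := by
      intro t ht
      have h2 : ∀ j ∈ range p,
          (Cs ((t + j * k : ℕ) : ZMod ν)).factorial = (g t).factorial := by
        intro j hj
        rw [hCs_cast _ (pair_lt hk (mem_range.mp ht) (mem_range.mp hj)), hg_add]
      rw [Finset.prod_congr rfl h2, Finset.prod_const, card_range]
    rw [Finset.prod_congr rfl h1, Finset.prod_pow]
    congr 1
    rw [← Fin.prod_univ_eq_prod_range (fun t => (g t).factorial) k]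
    exact Finset.prod_congr rfl fun t _ => congrArg Nat.factorial (hg_fin t)
  have hmain := card_counts_mul m Cs hCsum
  rw [hprod] at hmain
  have hpos : 0 < (∏ i, (s i).factorial) ^ p :=
    pow_pos (Finset.prod_pos fun i _ => Nat.factorial_pos _) _
  have hcard : (Finset.filter (fun b => ∀ e, cnt b e = Cs e) univ).card
      = Fintype.card {b : Fin m → ZMod ν // ∀ e, cnt b e = Cs e} :=
    (Fintype.card_subtype _).symm
  rw [hcard]
  exact (Nat.div_eq_of_eq_mul_left hpos hmain.symm).symm

end Glue

theorem beta_prime_power (p : ℕ) (hp : p.Prime) (r : ℕ) (hr : 0 < r)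
    (ν : ℕ) (hν : ν = p ^ r) (μ : ℕ) (hμ : 0 < μ) :
    (¬ p ∣ μ + 1 → beta μ ν = 0) ∧
    (p ∣ μ + 1 →
      ν * beta μ ν =
        ∑ s ∈ Finset.Nat.antidiagonalTuple (ν / p) ((μ + 1) / p),
          Nat.factorial (μ + 1) / (∏ i, Nat.factorial (s i)) ^ p) := by
  classical
  set k := p ^ (r - 1) with hkdef
  have hp2 : 2 ≤ p := hp.two_le
  have hk0 : 0 < k := pow_pos hp.pos _
  have hk : ν = k * p := by
    rw [hν, hkdef, ← pow_succ]
    congr 1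
    omega
  have hν0 : 0 < ν := by rw [hk]; positivity
  haveI : NeZero ν := ⟨hν0.ne'⟩
  have htot : ν.totient = k * (p - 1) := by
    rw [hν, Nat.totient_prime_pow hp hr, hkdef]
  have hνp : ν / p = k := by rw [hk, Nat.mul_div_cancel _ hp.pos]
  set ζ : ℂ := Complex.exp (2 * Real.pi * Complex.I / ν) with hζdef
  have hζ : IsPrimitiveRoot ζ ν := Complex.isPrimitiveRoot_exp ν hν0.ne'
  have hB : ν * beta μ ν
      = Nat.card {b : Fin (μ + 1) → ZMod ν // (∑ i, ζ ^ ((b i).val)) = 0} := by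
    rw [beta_card hζ μ, ← step_B hζ μ]
  have hcard : Nat.card {b : Fin (μ + 1) → ZMod ν // (∑ i, ζ ^ ((b i).val)) = 0}
      = Fintype.card {b : Fin (μ + 1) → ZMod ν //
          ∀ e, cnt b e = cnt b (e + (k : ZMod ν))} := by
    rw [Nat.card_congr (Equiv.subtypeEquivRight
      (fun b => cond_iff_cnt hζ hk hp2 hk0 htot b))]
    exact Nat.card_eq_fintype_card
  constructor
  · intro hnd
    haveI : IsEmpty {b : Fin (μ + 1) → ZMod ν //
        ∀ e, cnt b e = cnt b (e + (k : ZMod ν))} := by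
      constructor
      intro x
      apply hnd
      exact Dvd.intro _ (sum_cnt_base hk hk0 x.1 x.2)
    have h0 : ν * beta μ ν = 0 := by
      rw [hB, hcard, Fintype.card_eq_zero]
    rcases Nat.mul_eq_zero.mp h0 with h | h
    · exact absurd h hν0.ne'
    · exact h
  · intro hdvd
    rw [hB, hcard, hνp, count_D hk hk0 hp2 (μ + 1) hdvd]
end

section
/- For a prime p, a p-tuple (z_1, ..., z_p) of p-th roots of unity satisfies z_1 + ... + z_p = 0 if and only if (z_1, ..., z_p) is a permutation of (1, ζ, ζ^2, ..., ζ^{p-1}), where ζ = e^{2πi/p}. -/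
open Polynomial Finset

theorem p_tuple_sum_zero_iff_perm (p : ℕ) (hp : p.Prime)
    (z : Fin p → ℂ) (hroots : ∀ i, z i ^ p = 1) :
    (∑ i, z i = 0) ↔
      ∃ σ : Equiv.Perm (Fin p),
        ∀ i, z i = Complex.exp (2 * Real.pi * Complex.I / p) ^ (σ i : ℕ) := by
  have : Fact p.Prime := ⟨hp⟩
  have : NeZero p := ⟨hp.ne_zero⟩
  set ζ : ℂ := Complex.exp (2 * Real.pi * Complex.I / p) with hζdef
  have hprim : IsPrimitiveRoot ζ p := Complex.isPrimitiveRoot_exp p hp.ne_zero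
  constructor
  · intro hsum
    choose m hm hmz using fun i => hprim.eq_pow_of_pow_eq_one (hroots i)
    set k : Fin p → Fin p := fun i => ⟨m i, hm i⟩ with hkdef
    -- the polynomial ∑ X^(m i) over ℚ
    set P : ℚ[X] := ∑ i : Fin p, X ^ (m i) with hPdef
    have haevalP : aeval ζ P = 0 := by
      rw [hPdef, map_sum]
      simp only [map_pow, aeval_X]
      rw [show (∑ i : Fin p, ζ ^ m i) = ∑ i, z i from Finset.sum_congr rfl fun i _ => hmz i]
      exact hsum
    have hminpoly : minpoly ℚ ζ = cyclotomic p ℚ :=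
      (cyclotomic_eq_minpoly_rat hprim hp.pos).symm
    have hdegmin : (minpoly ℚ ζ).natDegree = p - 1 := by
      rw [hminpoly, natDegree_cyclotomic, Nat.totient_prime hp]
    have hcoeffP : ∀ n : ℕ, P.coeff n = ((univ.filter fun i => m i = n).card : ℚ) := by
      intro n
      rw [hPdef, finset_sum_coeff]
      simp only [coeff_X_pow]
      have he : ∀ x : Fin p, (if n = m x then (1:ℚ) else 0) = if m x = n then 1 else 0 :=
        fun x => by simp [eq_comm]
      simp only [he, Finset.sum_boole]
    -- the key difference polynomial
    set c : ℚ := P.coeff (p - 1) with hcdef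
    set D : ℚ[X] := P - C c * cyclotomic p ℚ with hDdef
    have haevalD : aeval ζ D = 0 := by
      rw [hDdef, map_sub, haevalP, map_mul, aeval_C, ← hminpoly, minpoly.aeval, mul_zero,
        sub_zero]
    have hDP : ∀ n, p - 1 ≤ n → D.coeff n = 0 := by
      intro n hn
      rcases eq_or_lt_of_le hn with hn | hn
      · rw [hDdef, coeff_sub, coeff_C_mul, cyclotomic_prime, ← hn]
        have : ((Finset.range p).sum fun i => (X : ℚ[X]) ^ i).coeff (p - 1) = 1 := by
          rw [finset_sum_coeff]
          simp only [coeff_X_pow]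
          rw [Finset.sum_ite_eq (Finset.range p)]
          simp [Nat.sub_lt hp.pos one_pos]
        rw [this, mul_one, hcdef, sub_self]
      · have hPn : P.coeff n = 0 := by
          rw [hcoeffP]
          norm_cast
          rw [Finset.card_eq_zero, Finset.filter_eq_empty_iff]
          intro i _
          exact fun h => absurd (h ▸ hm i) (by omega)
        have hcyc : (cyclotomic p ℚ).coeff n = 0 := by
          apply coeff_eq_zero_of_natDegree_lt
          rw [natDegree_cyclotomic, Nat.totient_prime hp]
          omega
        rw [hDdef, coeff_sub, hPn, coeff_C_mul, hcyc, mul_zero, sub_zero]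
    have hDdeg : D.degree < (p - 1 : ℕ) := by
      exact (Polynomial.degree_lt_iff_coeff_zero D (p - 1)).mpr hDP
    have hD0 : D = 0 := by
      by_contra hne
      have := minpoly.degree_le_of_ne_zero ℚ ζ hne haevalD
      rw [hminpoly, degree_eq_natDegree (cyclotomic_ne_zero p ℚ), natDegree_cyclotomic,
        Nat.totient_prime hp] at this
      exact absurd (this.trans_lt hDdeg) (lt_irrefl _)
    -- so P = c * cyclotomic; all coefficients below p equal c
    have hcoeq : ∀ n < p, P.coeff n = c := by
      intro n hn
      have : D.coeff n = 0 := by rw [hD0]; simp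
      rw [hDdef, coeff_sub, sub_eq_zero] at this
      rw [this, coeff_C_mul, cyclotomic_prime]
      have : ((Finset.range p).sum fun i => (X : ℚ[X]) ^ i).coeff n = 1 := by
        rw [finset_sum_coeff]
        simp only [coeff_X_pow]
        rw [Finset.sum_ite_eq (Finset.range p)]
        simp [hn]
      rw [this, mul_one]
    -- sum of coefficients is p
    have hsumc : ∑ n ∈ Finset.range p, P.coeff n = p := by
      simp only [hcoeffP]
      rw [← Nat.cast_sum]
      norm_cast
      rw [← Finset.card_biUnion]
      · rw [show (Finset.range p).biUnion (fun n => univ.filter fun i => m i = n) = univ from ?_]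
        · simp
        · ext i
          simp only [Finset.mem_biUnion, Finset.mem_range, Finset.mem_filter, Finset.mem_univ,
            true_and, iff_true]
          exact ⟨m i, hm i, rfl⟩
      · intro a _ b _ hab
        refine Finset.disjoint_left.mpr fun i hi1 hi2 => hab ?_
        simp only [Finset.mem_filter] at hi1 hi2
        rw [← hi1.2, hi2.2]
    have hc1 : c = 1 := by
      have hpc : (p : ℚ) * c = p := by
        have h2 : ∑ n ∈ Finset.range p, P.coeff n = (p : ℚ) * c := by
          rw [Finset.sum_congr rfl fun n hn => hcoeq n (Finset.mem_range.mp hn),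
            Finset.sum_const, Finset.card_range, nsmul_eq_mul]
        rw [← h2, hsumc]
      have hpne : (p : ℚ) ≠ 0 := Nat.cast_ne_zero.mpr hp.ne_zero
      exact mul_left_cancel₀ hpne (by rw [mul_one]; exact hpc)
    -- each fiber has card 1
    have hfib : ∀ n < p, (univ.filter fun i => m i = n).card = 1 := by
      intro n hn
      have := hcoeq n hn
      rw [hcoeffP, hc1] at this
      exact_mod_cast this
    have hkinj : Function.Injective k := by
      intro a b hab
      have hfa := hfib (m a) (hm a)
      rw [Finset.card_eq_one] at hfa
      obtain ⟨x, hx⟩ := hfa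
      have ha : a ∈ univ.filter fun i => m i = m a := by simp
      have hmab : m a = m b := congrArg Fin.val hab
      have hb : b ∈ univ.filter fun i => m i = m a := by simp [hmab]
      rw [hx, Finset.mem_singleton] at ha hb
      rw [ha, hb]
    refine ⟨Equiv.ofBijective k (Finite.injective_iff_bijective.mp hkinj), fun i => ?_⟩
    exact (hmz i).symm
  · rintro ⟨σ, hσ⟩
    calc ∑ i, z i = ∑ i : Fin p, ζ ^ ((σ i : Fin p) : ℕ) := Finset.sum_congr rfl fun i _ => hσ i
    _ = ∑ j : Fin p, ζ ^ (j : ℕ) := Equiv.sum_comp σ fun j : Fin p => ζ ^ (j : ℕ)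
    _ = ∑ j ∈ Finset.range p, ζ ^ j := Fin.sum_univ_eq_sum_range _ _
    _ = 0 := hprim.geom_sum_eq_zero hp.one_lt
end
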